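/- arXiv:1005.4724 — 6 statements merged into one kernel-verified Lean document; each statement's English description precedes it below -/
import Mathlib

section
/- Let R and S be finite sets of positive integers satisfying the tableau condition, and let f be the greedy matching of S into R. Then the arcs produced by f are pairwise noncrossing: for all i, i′ ∈ S with i < i′, it is not the case that f(i) < f(i′) < i < i′. -/
/-
If `f(i') < i < i'`, then `f(i')` was still unused when `i` was processed, since everything
matched before `i` was matched before `i'` as well. So `f(i')` was a candidate at step `i`, and
the greedy choice of the largest candidate gives `f(i') ≤ f(i)`.
-/

open scoped Classical

/-- The `j`-th smallest element (0-indexed) of a finite set of naturals (default `0`). -/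
noncomputable def nthSmallest (s : Finset ℕ) (j : ℕ) : ℕ := (s.sort (· ≤ ·)).getD j 0

/-- `(R, S)` satisfies the tableau condition: `|S| ≤ |R|` and for every `j ≤ |S|`, the `j`-th
smallest element of `S` is greater than the `j`-th smallest element of `R`. -/
def TableauCond (R S : Finset ℕ) : Prop :=
  S.card ≤ R.card ∧ ∀ j < S.card, nthSmallest R j < nthSmallest S j

/-- The greedy matching of `S` into `R`: processing the elements `i` of `S` in increasing
order, `greedy R S i = max { j ∈ R : j < i and j ≠ greedy R S i' for every i' ∈ S with i' < i }`
(with value `0` when this set is empty or `i ∉ S`). -/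
noncomputable def greedy (R S : Finset ℕ) (i : ℕ) : ℕ :=
  Nat.strongRecOn i fun i ih =>
    WithBot.unbotD 0 ((R.filter fun j => j < i ∧ ∀ i' (_ : i' ∈ S) (h : i' < i), j ≠ ih i' h).max)

section UnbotDMax

variable {α : Type*} [LinearOrder α] {s : Finset α} {a : α}

theorem Finset.le_max_unbotD (d : α) (ha : a ∈ s) : a ≤ s.max.unbotD d := by
  obtain ⟨m, hm⟩ := Finset.max_of_mem ha
  rw [hm, WithBot.unbotD_coe]
  exact Finset.le_max_of_eq ha hm

theorem Finset.max_unbotD_mem {d : α} (hd : s.max.unbotD d ≠ d) : s.max.unbotD d ∈ s := by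
  cases hm : s.max with
  | bot => rw [hm, WithBot.unbotD_bot] at hd; exact absurd rfl hd
  | coe m => exact Finset.mem_of_max hm

end UnbotDMax

noncomputable def greedyCandidates (R S : Finset ℕ) (i : ℕ) : Finset ℕ :=
  R.filter fun j => j < i ∧ ∀ i' ∈ S, i' < i → j ≠ greedy R S i'

section Greedy

variable {R S : Finset ℕ} {i i' j : ℕ}

theorem greedy_eq_max_unbotD (R S : Finset ℕ) (i : ℕ) :
    greedy R S i = (greedyCandidates R S i).max.unbotD 0 := by
  rw [greedy, Nat.strongRecOn, WellFounded.fix_eq]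
  rfl

theorem le_greedy_of_mem_greedyCandidates (hj : j ∈ greedyCandidates R S i) :
    j ≤ greedy R S i :=
  greedy_eq_max_unbotD R S i ▸ Finset.le_max_unbotD 0 hj

theorem greedy_mem_greedyCandidates (hi : greedy R S i ≠ 0) :
    greedy R S i ∈ greedyCandidates R S i := by
  rw [greedy_eq_max_unbotD] at hi ⊢
  exact Finset.max_unbotD_mem hi

theorem mem_greedyCandidates_of_le (hj : j ∈ greedyCandidates R S i') (hii' : i ≤ i')
    (hji : j < i) : j ∈ greedyCandidates R S i := by
  simp only [greedyCandidates, Finset.mem_filter] at hj ⊢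
  obtain ⟨hjR, -, hfree⟩ := hj
  exact ⟨hjR, hji, fun k hk hki => hfree k hk (hki.trans_le hii')⟩

end Greedy

theorem greedy_matching_noncrossing_general (R S : Finset ℕ) :
    ∀ i ∈ S, ∀ i' ∈ S, i < i' →
      ¬ (greedy R S i < greedy R S i' ∧ greedy R S i' < i) := by
  rintro i - i' - hii' ⟨hcross, hlt⟩
  have hmatched : greedy R S i' ≠ 0 := by omega
  have hcand : greedy R S i' ∈ greedyCandidates R S i :=
    mem_greedyCandidates_of_le (greedy_mem_greedyCandidates hmatched) hii'.le hlt
  exact (le_greedy_of_mem_greedyCandidates hcand).not_gt hcross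

/-- The arcs produced by the greedy matching are pairwise noncrossing: for `i, i' ∈ S`
with `i < i'`, it is not the case that `f(i) < f(i') < i < i'`. -/
theorem greedy_matching_noncrossing (R S : Finset ℕ)
    (hRpos : ∀ x ∈ R, 0 < x) (hSpos : ∀ x ∈ S, 0 < x)
    (h : TableauCond R S) :
    ∀ i ∈ S, ∀ i' ∈ S, i < i' →
      ¬ (greedy R S i < greedy R S i' ∧ greedy R S i' < i) :=
  greedy_matching_noncrossing_general R S
end

section
/- In the m-diagram of a three-row standard Young tableau, if two distinct arcs cross, then one of them is a first arc and the other is a second arc. In particular, two first arcs never cross and two second arcs never cross. -/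
open scoped Classical

/-- The arcs produced by the greedy matching of `S` into `R`, as ordered pairs
`(left endpoint, right endpoint)`. -/
noncomputable def arcsOf (R S : Finset ℕ) : Finset (ℕ × ℕ) :=
  S.image fun i => (greedy R S i, i)

/-- `(B, M, T)` (bottom, middle, top rows) encodes a three-row standard Young tableau with
`N` boxes: the rows partition `{1,…,N}`, row lengths weakly decrease from bottom to top, and
consecutive rows satisfy the tableau condition. -/
def ThreeRowSYT (N : ℕ) (B M T : Finset ℕ) : Prop :=
  Disjoint B M ∧ Disjoint B T ∧ Disjoint M T ∧
  B ∪ M ∪ T = Finset.Icc 1 N ∧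
  T.card ≤ M.card ∧ M.card ≤ B.card ∧
  TableauCond B M ∧ TableauCond M T

/-- Two arcs `(p,q)` and `(p',q')` (with `p<q`, `p'<q'`) cross if `p<p'<q<q'` or
`p'<p<q'<q`. -/
def Cross (a b : ℕ × ℕ) : Prop :=
  (a.1 < b.1 ∧ b.1 < a.2 ∧ a.2 < b.2) ∨ (b.1 < a.1 ∧ a.1 < b.2 ∧ b.2 < a.2)

/-! A greedy matching is non-crossing: if `i < i'` and the partner `p'` of `i'` lies below `i`,
then `p'` was still free and below `i` when `i` was matched, so the greedy choice for `i` is at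
least `p'`. -/

namespace Greedy

variable (R S : Finset ℕ)

noncomputable def candidates (i : ℕ) : Finset ℕ :=
  R.filter fun j => j < i ∧ ∀ i' ∈ S, i' < i → j ≠ greedy R S i'

theorem greedy_eq (i : ℕ) : greedy R S i = WithBot.unbotD 0 (candidates R S i).max := by
  rw [greedy, Nat.strongRecOn_eq]
  rfl

variable {R S}

theorem le_greedy_of_mem_candidates {i j : ℕ} (hj : j ∈ candidates R S i) : j ≤ greedy R S i := by
  have hle := Finset.le_max hj
  rw [greedy_eq]
  cases hmax : (candidates R S i).max with
  | bot => simp [hmax] at hle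
  | coe m => exact WithBot.coe_le_coe.mp (hmax ▸ hle)

theorem greedy_mem_candidates {i : ℕ} (hpos : 0 < greedy R S i) :
    greedy R S i ∈ candidates R S i := by
  rw [greedy_eq] at hpos ⊢
  cases hmax : (candidates R S i).max with
  | bot => simp [hmax] at hpos
  | coe m => exact Finset.mem_of_max hmax

theorem mem_candidates_of_lt {i i' j : ℕ} (hii' : i < i') (hji : j < i)
    (hj : j ∈ candidates R S i') : j ∈ candidates R S i := by
  simp only [candidates, Finset.mem_filter] at hj ⊢
  exact ⟨hj.1, hji, fun k hk hki => hj.2.2 k hk (hki.trans hii')⟩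

theorem greedy_le_greedy_of_greedy_lt {i i' : ℕ} (hii' : i < i') (hlt : greedy R S i' < i) :
    greedy R S i' ≤ greedy R S i := by
  rcases Nat.eq_zero_or_pos (greedy R S i') with hzero | hpos
  · exact hzero ▸ Nat.zero_le _
  · exact le_greedy_of_mem_candidates (mem_candidates_of_lt hii' hlt (greedy_mem_candidates hpos))

end Greedy

theorem not_cross_of_mem_arcsOf (R S : Finset ℕ) {a a' : ℕ × ℕ}
    (ha : a ∈ arcsOf R S) (ha' : a' ∈ arcsOf R S) : ¬ Cross a a' := by
  simp only [arcsOf, Finset.mem_image] at ha ha'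
  obtain ⟨i, -, rfl⟩ := ha
  obtain ⟨i', -, rfl⟩ := ha'
  rintro (⟨h₁, h₂, h₃⟩ | ⟨h₁, h₂, h₃⟩)
  · exact absurd (Greedy.greedy_le_greedy_of_greedy_lt h₃ h₂) (not_le.mpr h₁)
  · exact absurd (Greedy.greedy_le_greedy_of_greedy_lt h₃ h₂) (not_le.mpr h₁)

theorem crossing_arcs_are_first_and_second_general (B M T : Finset ℕ)
    (a a' : ℕ × ℕ)
    (ha : a ∈ arcsOf B M ∪ arcsOf M T) (ha' : a' ∈ arcsOf B M ∪ arcsOf M T)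
    (hcross : Cross a a') :
    (a ∈ arcsOf B M ∧ a' ∈ arcsOf M T) ∨ (a ∈ arcsOf M T ∧ a' ∈ arcsOf B M) := by
  rw [Finset.mem_union] at ha ha'
  rcases ha with ha | ha <;> rcases ha' with ha' | ha'
  · exact absurd hcross (not_cross_of_mem_arcsOf B M ha ha')
  · exact Or.inl ⟨ha, ha'⟩
  · exact Or.inr ⟨ha, ha'⟩
  · exact absurd hcross (not_cross_of_mem_arcsOf M T ha ha')

/-- In the m-diagram of a three-row standard Young tableau, if two distinct arcs cross,
then one of them is a first arc (an arc of `arcsOf B M`) and the other is a second arc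
(an arc of `arcsOf M T`). -/
theorem crossing_arcs_are_first_and_second (N : ℕ) (B M T : Finset ℕ)
    (h : ThreeRowSYT N B M T) (a a' : ℕ × ℕ)
    (ha : a ∈ arcsOf B M ∪ arcsOf M T) (ha' : a' ∈ arcsOf B M ∪ arcsOf M T)
    (hne : a ≠ a') (hcross : Cross a a') :
    (a ∈ arcsOf B M ∧ a' ∈ arcsOf M T) ∨ (a ∈ arcsOf M T ∧ a' ∈ arcsOf B M) :=
  crossing_arcs_are_first_and_second_general B M T a a' ha ha' hcross
end

section
/- In the m-diagram of a three-row standard Young tableau, any two distinct ms cross at most once: if (i,j,k) and (i′,j′,k′) are distinct ms, then at most one of the four pairs of arcs {(i,j),(j,k)} × {(i′,j′),(j′,k′)} is a crossing pair. -/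
open scoped Classical

/-- `(i,j,k)` is an m of the m-diagram of the three-row tableau `(B,M,T)`. -/
def IsM (B M T : Finset ℕ) (i j k : ℕ) : Prop :=
  j ∈ M ∧ i = greedy B M j ∧ k ∈ T ∧ greedy M T k = j

/-
Arcs of one greedy matching never cross: if `x < y` and the arc of `y` starts before `x`, then
its left end was still available when `x` was processed, so the greedy choice for `x` is at least
as large, i.e. the arc of `y` also starts before the arc of `x`. A lower arc `(i, j)` and an upper
arc `(j', k')` can only cross when `j' < j`, and `(j, k)`, `(i', j')` only when `j < j'`, so these
two crossings exclude each other.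
-/

noncomputable def greedyAvailable (R S : Finset ℕ) (i : ℕ) : Finset ℕ :=
  R.filter fun j => j < i ∧ ∀ i' ∈ S, i' < i → j ≠ greedy R S i'

lemma greedy_eq_unbotD_max (R S : Finset ℕ) (i : ℕ) :
    greedy R S i = (greedyAvailable R S i).max.unbotD 0 := by
  conv_lhs => rw [greedy, Nat.strongRecOn, WellFounded.fix_eq]
  rfl

lemma le_greedy_of_mem_greedyAvailable {R S : Finset ℕ} {i j : ℕ}
    (hj : j ∈ greedyAvailable R S i) : j ≤ greedy R S i := by
  obtain ⟨m, hm⟩ := Finset.max_of_mem hj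
  rw [greedy_eq_unbotD_max, hm]
  exact WithBot.coe_le_coe.mp (hm ▸ Finset.le_max hj)

lemma mem_greedyAvailable_of_lt {R S : Finset ℕ} {x y j : ℕ}
    (hj : j ∈ greedyAvailable R S y) (hxy : x < y) (hjx : j < x) :
    j ∈ greedyAvailable R S x := by
  simp only [greedyAvailable, Finset.mem_filter] at hj ⊢
  exact ⟨hj.1, hjx, fun i' hi' hi'x => hj.2.2 i' hi' (hi'x.trans hxy)⟩

lemma greedy_le_greedy_of_lt {R S : Finset ℕ} {x y : ℕ} (hxy : x < y)
    (hy : greedy R S y < x) : greedy R S y ≤ greedy R S x := by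
  rcases hmax : (greedyAvailable R S y).max with _ | m
  · rw [greedy_eq_unbotD_max R S y, hmax]
    exact Nat.zero_le _
  · have hgy : greedy R S y = m := by rw [greedy_eq_unbotD_max, hmax]; rfl
    rw [hgy] at hy ⊢
    exact le_greedy_of_mem_greedyAvailable
      (mem_greedyAvailable_of_lt (Finset.mem_of_max hmax) hxy hy)

theorem not_cross_greedy (R S : Finset ℕ) (a b : ℕ) :
    ¬ Cross (greedy R S a, a) (greedy R S b, b) := by
  rintro (⟨h₁, h₂, h₃⟩ | ⟨h₁, h₂, h₃⟩) <;> dsimp only at h₁ h₂ h₃ <;>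
    have := greedy_le_greedy_of_lt (R := R) (S := S) h₃ h₂ <;> omega

lemma Cross.right_fst_lt_left_snd {a b : ℕ × ℕ} (h : Cross a b) : b.1 < a.2 := by
  rcases h with ⟨-, h, -⟩ | ⟨h₁, h₂, h₃⟩
  · exact h
  · omega

lemma Cross.left_fst_lt_right_snd {a b : ℕ × ℕ} (h : Cross a b) : a.1 < b.2 := by
  rcases h with ⟨h₁, h₂, h₃⟩ | ⟨-, h, -⟩
  · omega
  · exact h

theorem two_ms_cross_at_most_once_general (B M T : Finset ℕ)
    (i j k i' j' k' : ℕ)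
    (hm : IsM B M T i j k) (hm' : IsM B M T i' j' k') :
    ¬ (Cross (i, j) (i', j') ∧ Cross (i, j) (j', k')) ∧
    ¬ (Cross (i, j) (i', j') ∧ Cross (j, k) (i', j')) ∧
    ¬ (Cross (i, j) (i', j') ∧ Cross (j, k) (j', k')) ∧
    ¬ (Cross (i, j) (j', k') ∧ Cross (j, k) (i', j')) ∧
    ¬ (Cross (i, j) (j', k') ∧ Cross (j, k) (j', k')) ∧
    ¬ (Cross (j, k) (i', j') ∧ Cross (j, k) (j', k')) := by
  obtain ⟨-, rfl, -, rfl⟩ := hm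
  obtain ⟨-, rfl, -, rfl⟩ := hm'
  have hlower := not_cross_greedy B M (greedy M T k) (greedy M T k')
  have hupper := not_cross_greedy M T k k'
  refine ⟨fun h => hlower h.1, fun h => hlower h.1, fun h => hlower h.1, fun ⟨h₁, h₂⟩ => ?_,
    fun h => hupper h.2, fun h => hupper h.2⟩
  exact h₁.right_fst_lt_left_snd.asymm h₂.left_fst_lt_right_snd

/-- Any two distinct ms of the m-diagram of a three-row standard Young tableau cross at
most once: at most one of the four pairs of arcs `{(i,j),(j,k)} × {(i',j'),(j',k')}`
is a crossing pair. -/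
theorem two_ms_cross_at_most_once (N : ℕ) (B M T : Finset ℕ)
    (h : ThreeRowSYT N B M T) (i j k i' j' k' : ℕ)
    (hm : IsM B M T i j k) (hm' : IsM B M T i' j' k')
    (hne : (i, j, k) ≠ (i', j', k')) :
    ¬ (Cross (i, j) (i', j') ∧ Cross (i, j) (j', k')) ∧
    ¬ (Cross (i, j) (i', j') ∧ Cross (j, k) (i', j')) ∧
    ¬ (Cross (i, j) (i', j') ∧ Cross (j, k) (j', k')) ∧
    ¬ (Cross (i, j) (j', k') ∧ Cross (j, k) (i', j')) ∧
    ¬ (Cross (i, j) (j', k') ∧ Cross (j, k) (j', k')) ∧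
    ¬ (Cross (j, k) (i', j') ∧ Cross (j, k) (j', k')) :=
  two_ms_cross_at_most_once_general B M T i j k i' j' k' hm hm'
end

section
/- Let A be the arc set of the m-diagram of a three-row standard Young tableau with rows B, M, T, and let δ be the circle-depth difference function. Then: (a) if i = f₁(j) for some j ∈ M (i.e., i is the first boundary vertex of an m or of an isolated arc), then δ(i) = 1; (b) if j ∈ M and j = f₂(k) for some k ∈ T (i.e., j is the second boundary vertex of an m), then δ(j) = 0; (c) if k ∈ T, or k ∈ M and k is not in the image of f₂ (i.e., k is the last boundary vertex of an m or of an isolated arc), then δ(k) = −1. -/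
open scoped Classical

/-- `d(i+ε)`: the number of arcs `(a,b) ∈ A` with `a ≤ i < b`. -/
noncomputable def dPlus (A : Finset (ℕ × ℕ)) (i : ℕ) : ℕ :=
  (A.filter fun a => a.1 ≤ i ∧ i < a.2).card

/-- `d(i−ε)`: the number of arcs `(a,b) ∈ A` with `a < i ≤ b`. -/
noncomputable def dMinus (A : Finset (ℕ × ℕ)) (i : ℕ) : ℕ :=
  (A.filter fun a => a.1 < i ∧ i ≤ a.2).card

/-- The circle-depth difference function `δ(i) = d(i+ε) − d(i−ε)`. -/
noncomputable def deltaDepth (A : Finset (ℕ × ℕ)) (i : ℕ) : ℤ :=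
  (dPlus A i : ℤ) - (dMinus A i : ℤ)

open Finset

/-!
δ(i) is the number of arcs with left endpoint i minus the number with right endpoint i, and it is
additive over the two layers of arcs. The tableau condition is a ballot condition: below every
i ∈ S there are more elements of R than of S, so the greedy matching always finds an unused
partner in R below i, and it is injective. Hence in the layer (R, S) every vertex of S ends one
arc and every vertex of f(S) starts one, so δ(i) = [i ∈ f₁(M)] − [i ∈ M] + [i ∈ f₂(T)] − [i ∈ T].
As f₁(M) ⊆ B and f₂(T) ⊆ M, the disjointness of B, M, T evaluates this in each of the three cases.
-/

theorem nthSmallest_eq_nth (s : Finset ℕ) (j : ℕ) : nthSmallest s j = Nat.nth (· ∈ s) j := by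
  rw [Nat.nth_eq_getD_sort (p := (· ∈ s)) s.finite_toSet]
  simp [nthSmallest]

theorem greedy_eq (R S : Finset ℕ) (i : ℕ) :
    greedy R S i =
      ({j ∈ R | j < i ∧ ∀ i' ∈ S, i' < i → j ≠ greedy R S i'}.max).unbotD 0 := by
  rw [greedy, Nat.strongRecOn, WellFounded.fix_eq]
  rfl

namespace TableauCond

variable {R S : Finset ℕ}

theorem count_lt (h : TableauCond R S) {i : ℕ} (hi : i ∈ S) :
    Nat.count (· ∈ S) i < Nat.count (· ∈ R) i := by
  set j := Nat.count (· ∈ S) i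
  have hjS : j < #S := by simpa using Nat.count_lt_card (p := (· ∈ S)) S.finite_toSet hi
  have hjR : j < #(R.finite_toSet.toFinset) := by simpa using hjS.trans_le h.1
  have hnthR : Nat.nth (· ∈ R) j < i := by
    simpa only [nthSmallest_eq_nth, j, Nat.nth_count hi] using h.2 j hjS
  calc j = Nat.count (· ∈ R) (Nat.nth (· ∈ R) j) :=
        (Nat.count_nth_of_lt_card_finite (p := (· ∈ R)) _ hjR).symm
    _ < Nat.count (· ∈ R) i :=
        Nat.count_strict_mono (Nat.nth_mem_of_lt_card (p := (· ∈ R)) _ hjR) hnthR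

theorem greedy_spec (h : TableauCond R S) {i : ℕ} (hi : i ∈ S) :
    greedy R S i ∈ R ∧ greedy R S i < i ∧
      ∀ i' ∈ S, i' < i → greedy R S i ≠ greedy R S i' := by
  set F := {j ∈ R | j < i ∧ ∀ i' ∈ S, i' < i → j ≠ greedy R S i'}
  have hunused :
      {x ∈ range i | x ∈ R} \ {x ∈ range i | x ∈ S}.image (greedy R S) ⊆ F := by
    intro r hr
    simp only [mem_sdiff, mem_filter, mem_range, mem_image, not_exists, not_and] at hr
    exact mem_filter.2 ⟨hr.1.2, hr.1.1, fun i' hi' hlt he => hr.2 i' ⟨hlt, hi'⟩ he.symm⟩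
  have hF : F.Nonempty := by
    rw [← card_pos]
    calc 0 < #{x ∈ range i | x ∈ R} - #{x ∈ range i | x ∈ S} := by
          simpa only [Nat.count_eq_card_filter_range, Nat.sub_pos_iff_lt] using h.count_lt hi
      _ ≤ #{x ∈ range i | x ∈ R} - #({x ∈ range i | x ∈ S}.image (greedy R S)) :=
          Nat.sub_le_sub_left card_image_le _
      _ ≤ #({x ∈ range i | x ∈ R} \ {x ∈ range i | x ∈ S}.image (greedy R S)) :=
          le_card_sdiff _ _
      _ ≤ #F := card_le_card hunused
  obtain ⟨m, hm⟩ := max_of_nonempty hF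
  have hgm : greedy R S i = m := by rw [greedy_eq, hm]; rfl
  exact hgm ▸ mem_filter.1 (mem_of_max hm)

theorem image_greedy_subset (h : TableauCond R S) : S.image (greedy R S) ⊆ R :=
  image_subset_iff.2 fun _ hi => (h.greedy_spec hi).1

theorem greedy_lt (h : TableauCond R S) {i : ℕ} (hi : i ∈ S) : greedy R S i < i :=
  (h.greedy_spec hi).2.1

theorem greedy_injOn (h : TableauCond R S) : Set.InjOn (greedy R S) S := by
  intro i hi i' hi' he
  rcases lt_trichotomy i i' with hlt | heq | hlt
  · exact absurd he.symm ((h.greedy_spec hi').2.2 i hi hlt)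
  · exact heq
  · exact absurd he ((h.greedy_spec hi).2.2 i' hi' hlt)

end TableauCond

theorem deltaDepth_eq_card_sub_card {A : Finset (ℕ × ℕ)} (hA : ∀ a ∈ A, a.1 < a.2)
    (i : ℕ) :
    deltaDepth A i = #{a ∈ A | a.1 = i} - #{a ∈ A | a.2 = i} := by
  have hplus : dPlus A i = #{a ∈ A | a.1 = i} + #{a ∈ A | a.1 < i ∧ i < a.2} := by
    rw [dPlus, ← card_union_of_disjoint (disjoint_filter.2 fun a _ => by omega), ← filter_or]
    exact congrArg card (filter_congr fun a ha => by have := hA a ha; omega)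
  have hminus : dMinus A i = #{a ∈ A | a.2 = i} + #{a ∈ A | a.1 < i ∧ i < a.2} := by
    rw [dMinus, ← card_union_of_disjoint (disjoint_filter.2 fun a _ => by omega), ← filter_or]
    exact congrArg card (filter_congr fun a ha => by have := hA a ha; omega)
  rw [deltaDepth, hplus, hminus]
  push_cast
  ring

theorem deltaDepth_union {A A' : Finset (ℕ × ℕ)} (h : Disjoint A A') (i : ℕ) :
    deltaDepth (A ∪ A') i = deltaDepth A i + deltaDepth A' i := by
  have hd : ∀ p : ℕ × ℕ → Prop, [DecidablePred p] →
      #{a ∈ A ∪ A' | p a} = #{a ∈ A | p a} + #{a ∈ A' | p a} :=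
    fun p _ => by rw [filter_union, card_union_of_disjoint (disjoint_filter_filter h)]
  simp only [deltaDepth, dPlus, dMinus, hd]
  push_cast
  ring

theorem disjoint_arcsOf {R R' S S' : Finset ℕ} (h : Disjoint S S') :
    Disjoint (arcsOf R S) (arcsOf R' S') := by
  simp only [arcsOf, disjoint_left, mem_image]
  rintro _ ⟨i, hi, rfl⟩ ⟨i', hi', he⟩
  exact disjoint_left.1 h hi (by simp_all)

theorem TableauCond.deltaDepth_arcsOf {R S : Finset ℕ} (h : TableauCond R S) (i : ℕ) :
    deltaDepth (arcsOf R S) i =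
      (if i ∈ S.image (greedy R S) then 1 else 0) - if i ∈ S then 1 else 0 := by
  have hlt : ∀ a ∈ arcsOf R S, a.1 < a.2 := by
    simp only [arcsOf, mem_image]
    rintro _ ⟨i, hi, rfl⟩
    exact h.greedy_lt hi
  have hsnd_inj : Function.Injective fun s => (greedy R S s, s) :=
    fun _ _ he => (Prod.ext_iff.1 he).2
  have hstart : #{a ∈ arcsOf R S | a.1 = i} = #{x ∈ S.image (greedy R S) | x = i} := by
    rw [arcsOf, filter_image, card_image_of_injective _ hsnd_inj, filter_image,
      card_image_of_injOn (h.greedy_injOn.mono (coe_subset.2 (filter_subset _ _)))]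
  have hend : #{a ∈ arcsOf R S | a.2 = i} = #{s ∈ S | s = i} := by
    rw [arcsOf, filter_image, card_image_of_injective _ hsnd_inj]
  rw [deltaDepth_eq_card_sub_card hlt, hstart, hend, filter_eq', filter_eq']
  split_ifs <;> simp

/-- Circle-depth differences across the boundary vertices of the m-diagram of a three-row
standard Young tableau: depth increases by 1 at the first boundary vertex of an m or of an
isolated arc, is constant at the second boundary vertex of an m, and decreases by 1 at the
last boundary vertex of an m or of an isolated arc. -/
theorem deltaDepth_on_ms (N : ℕ) (B M T : Finset ℕ) (h : ThreeRowSYT N B M T) :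
    (∀ i, (∃ j ∈ M, greedy B M j = i) →
        deltaDepth (arcsOf B M ∪ arcsOf M T) i = 1) ∧
    (∀ j ∈ M, (∃ k ∈ T, greedy M T k = j) →
        deltaDepth (arcsOf B M ∪ arcsOf M T) j = 0) ∧
    (∀ k, (k ∈ T ∨ (k ∈ M ∧ ∀ t ∈ T, greedy M T t ≠ k)) →
        deltaDepth (arcsOf B M ∪ arcsOf M T) k = -1) := by
  obtain ⟨hBM, hBT, hMT, -, -, -, hBM_tab, hMT_tab⟩ := h
  have hδ (i : ℕ) : deltaDepth (arcsOf B M ∪ arcsOf M T) i =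
      ((if i ∈ M.image (greedy B M) then 1 else 0) - if i ∈ M then 1 else 0) +
      ((if i ∈ T.image (greedy M T) then 1 else 0) - if i ∈ T then 1 else 0) := by
    rw [deltaDepth_union (disjoint_arcsOf hMT), hBM_tab.deltaDepth_arcsOf,
      hMT_tab.deltaDepth_arcsOf]
  have hf₁ := hBM_tab.image_greedy_subset
  have hf₂ := hMT_tab.image_greedy_subset
  refine ⟨fun i hi => ?_, fun j hjM hj => ?_, fun k hk => ?_⟩
  · have hiB : i ∈ B := hf₁ (mem_image.2 hi)
    have hiM : i ∉ M := disjoint_left.1 hBM hiB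
    rw [hδ, if_pos (mem_image.2 hi), if_neg hiM, if_neg fun h => hiM (hf₂ h),
      if_neg (disjoint_left.1 hBT hiB)]
    rfl
  · rw [hδ, if_neg fun h => disjoint_left.1 hBM (hf₁ h) hjM, if_pos hjM,
      if_pos (mem_image.2 hj), if_neg (disjoint_left.1 hMT hjM)]
    rfl
  · rcases hk with hkT | ⟨hkM, hk⟩
    · have hkM : k ∉ M := disjoint_right.1 hMT hkT
      rw [hδ, if_neg fun h => hkM (hf₂ h), if_neg hkM,
        if_neg fun h => disjoint_right.1 hBT hkT (hf₁ h), if_pos hkT]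
      rfl
    · rw [hδ, if_neg fun h => disjoint_left.1 hBM (hf₁ h) hkM, if_pos hkM,
        if_neg (by simpa only [mem_image, not_exists, not_and] using hk),
        if_neg (disjoint_left.1 hMT hkM)]
      rfl
end

section
/- Let T and T′ be standard Young tableaux (of arbitrary shapes) with N and N′ boxes respectively. Then the shuffle T′ ↦_N T (shuffle at i = N) is a standard Young tableau and its arc set equals arcs(T) ∪ { (a + N, b + N) : (a,b) ∈ arcs(T′) }. -/
/-!
At `i = N` the map `σ` is the identity on `{1,…,N}`, so row `s` of the shuffle is
`T_s ∪ (T'_s + N)`, and every entry of the first block is smaller than every entry of the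
second. Sorted, such a row is the row of `T` followed by the shifted row of `T'`, so the
tableau condition holds blockwise. The greedy matching of an entry `i ≤ N` never sees the
shifted block, while an entry `x + N` always finds a free partner in the shifted block (by the
tableau condition of `T'`), which beats every candidate from `T`; so the matching restricted to
the shifted block is the shifted matching of `T'`.
-/

open scoped Classical

/-- A list of rows (bottom row first) encodes a standard Young tableau with `N` boxes:
the rows are nonempty, pairwise disjoint, partition `{1,…,N}`, and each consecutive pair of
rows satisfies the tableau condition (which forces weakly decreasing row lengths). -/
def IsSYT (N : ℕ) (L : List (Finset ℕ)) : Prop :=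
  (∀ s ∈ L, s.Nonempty) ∧
  L.Pairwise Disjoint ∧
  L.foldr (· ∪ ·) ∅ = Finset.Icc 1 N ∧
  (L.map Finset.card).Chain' (fun c c' => c' ≤ c) ∧
  L.Chain' TableauCond

/-- The arc set of the m-diagram of a tableau: the union over consecutive pairs of rows of
the arcs of the greedy matching of the upper row into the lower row. -/
noncomputable def arcsSYT (L : List (Finset ℕ)) : Finset (ℕ × ℕ) :=
  (L.zip L.tail).foldr (fun p acc => arcsOf p.1 p.2 ∪ acc) ∅

/-- The shuffle of a tableau `L'` (with `N'` boxes) into a tableau `L` at position `i`: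
row `s` of the shuffle is `{σ(x) : x ∈ L_s} ∪ {x + i : x ∈ L'_s}`, where `σ(x) = x` for
`x ≤ i` and `σ(x) = x + N'` for `x > i`. -/
noncomputable def shuffleRows (L L' : List (Finset ℕ)) (i N' : ℕ) : List (Finset ℕ) :=
  (List.range (max L.length L'.length)).map fun s =>
    ((L.getD s ∅).image fun x => if x ≤ i then x else x + N') ∪
    ((L'.getD s ∅).image fun x => x + i)

namespace Finset

variable {α : Type*} [LinearOrder α]

theorem sort_union_of_forall_lt {A B : Finset α} (h : ∀ a ∈ A, ∀ b ∈ B, a < b) :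
    (A ∪ B).sort (· ≤ ·) = A.sort (· ≤ ·) ++ B.sort (· ≤ ·) := by
  have hAB : Disjoint A B := disjoint_left.2 fun a ha hb => lt_irrefl a (h a ha a hb)
  refine List.Perm.eq_of_pairwise' (pairwise_sort _ _) ?_ ?_
  · refine List.pairwise_append.2 ⟨pairwise_sort _ _, pairwise_sort _ _, fun a ha b hb => ?_⟩
    exact (h a ((mem_sort _).1 ha) b ((mem_sort _).1 hb)).le
  · rw [← Multiset.coe_eq_coe, ← Multiset.coe_add, sort_eq, sort_eq, sort_eq,
      ← disjUnion_eq_union _ _ hAB, disjUnion_val]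

theorem sort_image_of_strictMono {f : α → α} (hf : StrictMono f) (A : Finset α) :
    (A.image f).sort (· ≤ ·) = (A.sort (· ≤ ·)).map f := by
  refine List.Perm.eq_of_pairwise' (pairwise_sort _ _) ?_ ?_
  · exact List.pairwise_map.2 ((pairwise_sort _ _).imp hf.monotone.imp)
  · rw [← Multiset.coe_eq_coe, sort_eq, ← Multiset.map_coe, sort_eq,
      image_val_of_injOn hf.injective.injOn]

end Finset

theorem nthSmallest_eq_getElem (s : Finset ℕ) {j : ℕ} (hj : j < s.card) :
    nthSmallest s j = (s.sort (· ≤ ·))[j]'(by rwa [Finset.length_sort]) :=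
  List.getD_eq_getElem _ _ _

theorem nthSmallest_mem (s : Finset ℕ) {j : ℕ} (hj : j < s.card) : nthSmallest s j ∈ s := by
  rw [nthSmallest_eq_getElem s hj]
  exact (Finset.mem_sort _).1 (List.getElem_mem _)

theorem exists_nthSmallest_eq {s : Finset ℕ} {x : ℕ} (hx : x ∈ s) :
    ∃ j < s.card, nthSmallest s j = x := by
  obtain ⟨j, hj, rfl⟩ := List.getElem_of_mem ((Finset.mem_sort (· ≤ ·)).2 hx)
  rw [Finset.length_sort] at hj
  exact ⟨j, hj, nthSmallest_eq_getElem s hj⟩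

theorem strictMonoOn_nthSmallest (s : Finset ℕ) :
    StrictMonoOn (nthSmallest s) (Set.Iio s.card) := by
  intro i hi j hj hij
  rw [nthSmallest_eq_getElem s hi, nthSmallest_eq_getElem s hj]
  exact (Finset.sortedLT_sort s).getElem_lt_getElem_iff.2 hij

theorem card_filter_lt_nthSmallest (s : Finset ℕ) {j : ℕ} (hj : j < s.card) :
    (s.filter (· < nthSmallest s j)).card = j := by
  have hmono := strictMonoOn_nthSmallest s
  have hrange : s.filter (· < nthSmallest s j) = (Finset.range j).image (nthSmallest s) := by
    ext x
    simp only [Finset.mem_filter, Finset.mem_image, Finset.mem_range]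
    constructor
    · rintro ⟨hx, hlt⟩
      obtain ⟨i, hi, rfl⟩ := exists_nthSmallest_eq hx
      exact ⟨i, (hmono.lt_iff_lt hi hj).1 hlt, rfl⟩
    · rintro ⟨i, hij, rfl⟩
      exact ⟨nthSmallest_mem s (hij.trans hj), hmono (hij.trans hj) hj hij⟩
  rw [hrange, Finset.card_image_of_injOn, Finset.card_range]
  exact hmono.injOn.mono fun i hi => (Finset.mem_range.1 hi).trans hj

theorem nthSmallest_union_of_forall_lt {A B : Finset ℕ} (h : ∀ a ∈ A, ∀ b ∈ B, a < b) (j : ℕ) :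
    nthSmallest (A ∪ B) j =
      if j < A.card then nthSmallest A j else nthSmallest B (j - A.card) := by
  simp only [nthSmallest, Finset.sort_union_of_forall_lt h]
  split_ifs with hj
  · exact List.getD_append _ _ _ _ (by rwa [Finset.length_sort])
  · rw [List.getD_append_right _ _ _ _ (by rw [Finset.length_sort]; omega), Finset.length_sort]

theorem nthSmallest_image_add (A : Finset ℕ) (N : ℕ) {j : ℕ} (hj : j < A.card) :
    nthSmallest (A.image (· + N)) j = nthSmallest A j + N := by
  have hj' : j < ((A.sort (· ≤ ·)).map (· + N)).length := by
    rwa [List.length_map, Finset.length_sort]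
  rw [nthSmallest, Finset.sort_image_of_strictMono add_left_strictMono,
    List.getD_eq_getElem _ _ hj', List.getElem_map, nthSmallest_eq_getElem A hj]

theorem forall_lt_image_add {A B : Finset ℕ} {N : ℕ} (hA : ∀ a ∈ A, a ≤ N)
    (hB : ∀ b ∈ B, 0 < b) : ∀ a ∈ A, ∀ b ∈ B.image (· + N), a < b := by
  intro a ha b hb
  obtain ⟨y, hy, rfl⟩ := Finset.mem_image.1 hb
  have := hA a ha
  have := hB y hy
  omega

theorem card_union_image_add {A B : Finset ℕ} {N : ℕ} (hA : ∀ a ∈ A, a ≤ N)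
    (hB : ∀ b ∈ B, 0 < b) : (A ∪ B.image (· + N)).card = A.card + B.card := by
  rw [Finset.card_union_of_disjoint, Finset.card_image_of_injective _ (add_left_injective N)]
  exact Finset.disjoint_left.2 fun a ha hb => lt_irrefl a (forall_lt_image_add hA hB a ha a hb)

theorem nthSmallest_union_image_add {A B : Finset ℕ} {N : ℕ} (hA : ∀ a ∈ A, a ≤ N)
    (hB : ∀ b ∈ B, 0 < b) {j : ℕ} (hj : j < A.card + B.card) :
    nthSmallest (A ∪ B.image (· + N)) j =
      if j < A.card then nthSmallest A j else nthSmallest B (j - A.card) + N := by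
  rw [nthSmallest_union_of_forall_lt (forall_lt_image_add hA hB)]
  split_ifs
  · rfl
  · exact nthSmallest_image_add B N (by omega)

theorem tableauCond_empty (R : Finset ℕ) : TableauCond R ∅ :=
  ⟨Nat.zero_le _, fun j hj => absurd hj (Nat.not_lt_zero j)⟩

/- For `j ≥ |S|` the `j`-th entry of the upper row is `x + N` with `x ∈ S'`, while the `j`-th
entry of the lower row is either at most `N` or `y + N` with `y` below an entry of `S'` that
does not come after `x`. -/
theorem TableauCond.union_image_add {R S R' S' : Finset ℕ} {N : ℕ}
    (hR : ∀ x ∈ R, x ≤ N) (hS : ∀ x ∈ S, x ≤ N) (hR' : ∀ x ∈ R', 0 < x)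
    (hS' : ∀ x ∈ S', 0 < x) (h : TableauCond R S) (h' : TableauCond R' S') :
    TableauCond (R ∪ R'.image (· + N)) (S ∪ S'.image (· + N)) := by
  obtain ⟨hcard, hlt⟩ := h
  obtain ⟨hcard', hlt'⟩ := h'
  rw [TableauCond, card_union_image_add hR hR', card_union_image_add hS hS']
  refine ⟨Nat.add_le_add hcard hcard', fun j hj => ?_⟩
  rw [nthSmallest_union_image_add hR hR' (by omega), nthSmallest_union_image_add hS hS' hj]
  by_cases hjS : j < S.card
  · rw [if_pos hjS, if_pos (hjS.trans_le hcard)]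
    exact hlt j hjS
  have hjS' : j - S.card < S'.card := by omega
  have hpos := hS' _ (nthSmallest_mem S' hjS')
  rw [if_neg hjS]
  by_cases hjR : j < R.card
  · rw [if_pos hjR]
    have := hR _ (nthSmallest_mem R hjR)
    omega
  rw [if_neg hjR]
  have hjR' : j - R.card < S'.card := by omega
  have hR'S' := hlt' _ hjR'
  have hS'mono := (strictMonoOn_nthSmallest S').monotoneOn (a := j - R.card) (b := j - S.card)
    hjR' hjS' (by omega)
  omega

noncomputable def greedyCands (R S : Finset ℕ) (i : ℕ) : Finset ℕ :=
  R.filter fun j => j < i ∧ ∀ i' ∈ S, i' < i → j ≠ greedy R S i'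

theorem greedy_eq_s11 (R S : Finset ℕ) (i : ℕ) :
    greedy R S i = (greedyCands R S i).max.unbotD 0 := by
  show Nat.lt_wfRel.wf.fix _ i = _
  rw [WellFounded.fix_eq]
  rfl

theorem greedy_eq_zero_or_mem (R S : Finset ℕ) (i : ℕ) : greedy R S i = 0 ∨ greedy R S i ∈ R := by
  rw [greedy_eq_s11]
  rcases hmax : (greedyCands R S i).max with _ | m
  · exact Or.inl rfl
  · exact Or.inr (Finset.filter_subset _ _ (Finset.mem_of_max hmax))

theorem greedy_le {R : Finset ℕ} {N : ℕ} (hR : ∀ x ∈ R, x ≤ N) (S : Finset ℕ) (i : ℕ) :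
    greedy R S i ≤ N := by
  rcases greedy_eq_zero_or_mem R S i with h | h
  · omega
  · exact hR _ h

theorem le_greedy_of_mem_greedyCands {R S : Finset ℕ} {i b : ℕ} (hb : b ∈ greedyCands R S i) :
    b ≤ greedy R S i := by
  rw [greedy_eq_s11, ← Finset.coe_max' ⟨b, hb⟩, WithBot.unbotD_coe]
  exact Finset.le_max' _ b hb

theorem greedy_eq_of_mem_greedyCands {R S : Finset ℕ} {i m : ℕ} (hm : m ∈ greedyCands R S i)
    (hmax : ∀ b ∈ greedyCands R S i, b ≤ m) : greedy R S i = m := by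
  rw [greedy_eq_s11, ← Finset.coe_max' ⟨m, hm⟩, WithBot.unbotD_coe]
  exact le_antisymm (Finset.max'_le _ _ _ hmax) (Finset.le_max' _ m hm)

/-- If `i` is the `k`-th entry of `S`, the first `k + 1` entries of `R` lie below `i`, and the
`k` entries of `S` before `i` have used at most `k` of them. -/
theorem greedyCands_nonempty {R S : Finset ℕ} (h : TableauCond R S) {i : ℕ} (hi : i ∈ S) :
    (greedyCands R S i).Nonempty := by
  obtain ⟨k, hk, rfl⟩ := exists_nthSmallest_eq hi
  have hkR : k < R.card := hk.trans_le h.1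
  set used := (S.filter (· < nthSmallest S k)).image (greedy R S)
  have hused : used.card ≤ k :=
    Finset.card_image_le.trans (card_filter_lt_nthSmallest S hk).le
  have hbelow : k + 1 ≤ (R.filter (· < nthSmallest S k)).card := by
    have hsub : insert (nthSmallest R k) (R.filter (· < nthSmallest R k)) ⊆
        R.filter (· < nthSmallest S k) := by
      refine Finset.insert_subset (Finset.mem_filter.2 ⟨nthSmallest_mem R hkR, h.2 k hk⟩) ?_
      intro x hx
      rw [Finset.mem_filter] at hx ⊢
      exact ⟨hx.1, hx.2.trans (h.2 k hk)⟩
    calc k + 1 = (insert (nthSmallest R k) (R.filter (· < nthSmallest R k))).card := by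
          rw [Finset.card_insert_of_notMem (by simp), card_filter_lt_nthSmallest R hkR]
      _ ≤ _ := Finset.card_le_card hsub
  have hfree : R.filter (· < nthSmallest S k) \ used ⊆ greedyCands R S (nthSmallest S k) := by
    intro j hj
    simp only [Finset.mem_sdiff, Finset.mem_filter, Finset.mem_image, used] at hj
    exact Finset.mem_filter.2
      ⟨hj.1.1, hj.1.2, fun i' hi' hlt heq => hj.2 ⟨i', ⟨hi', hlt⟩, heq.symm⟩⟩
  refine Finset.card_pos.1 (lt_of_lt_of_le ?_ (Finset.card_le_card hfree))
  have := Finset.le_card_sdiff used (R.filter (· < nthSmallest S k))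
  omega

theorem greedy_mem_greedyCands {R S : Finset ℕ} (h : TableauCond R S) {i : ℕ} (hi : i ∈ S) :
    greedy R S i ∈ greedyCands R S i := by
  obtain ⟨b, hb⟩ := greedyCands_nonempty h hi
  rw [greedy_eq_s11, ← Finset.coe_max' ⟨b, hb⟩, WithBot.unbotD_coe]
  exact Finset.max'_mem _ _

section UnionImageAdd

variable {R S R' S' : Finset ℕ} {N : ℕ}

theorem greedy_union_image_add_of_le (hR' : ∀ x ∈ R', 0 < x) (hS' : ∀ x ∈ S', 0 < x) {i : ℕ}
    (hi : i ≤ N) :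
    greedy (R ∪ R'.image (· + N)) (S ∪ S'.image (· + N)) i = greedy R S i := by
  induction i using Nat.strong_induction_on with
  | _ i IH =>
  have hcands : greedyCands (R ∪ R'.image (· + N)) (S ∪ S'.image (· + N)) i =
      greedyCands R S i := by
    ext j
    simp only [greedyCands, Finset.mem_filter, Finset.mem_union, Finset.mem_image]
    constructor
    · rintro ⟨hj | ⟨y, hy, rfl⟩, hji, hfree⟩
      · refine ⟨hj, hji, fun i' hi' hlt => ?_⟩
        rw [← IH i' hlt (by omega)]
        exact hfree i' (Or.inl hi') hlt
      · have := hR' y hy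
        omega
    · rintro ⟨hj, hji, hfree⟩
      refine ⟨Or.inl hj, hji, ?_⟩
      rintro i' (hi' | ⟨y, hy, rfl⟩) hlt
      · rw [IH i' hlt (by omega)]
        exact hfree i' hi' hlt
      · have := hS' y hy
        omega
  rw [greedy_eq_s11, hcands, ← greedy_eq_s11]

theorem greedy_union_image_add_add (hR : ∀ x ∈ R, x ≤ N) (hS : ∀ x ∈ S, x ≤ N)
    (hR' : ∀ x ∈ R', 0 < x) (hS' : ∀ x ∈ S', 0 < x) (h' : TableauCond R' S') {x : ℕ}
    (hx : x ∈ S') :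
    greedy (R ∪ R'.image (· + N)) (S ∪ S'.image (· + N)) (x + N) = greedy R' S' x + N := by
  induction x using Nat.strong_induction_on with
  | _ x IH =>
  have hS_lt : ∀ i' ∈ S, greedy (R ∪ R'.image (· + N)) (S ∪ S'.image (· + N)) i' ≤ N :=
    fun i' hi' => by
      rw [greedy_union_image_add_of_le hR' hS' (hS i' hi')]
      exact greedy_le hR S i'
  have hg := greedy_mem_greedyCands h' hx
  simp only [greedyCands, Finset.mem_filter] at hg
  have hgpos := hR' _ hg.1
  apply greedy_eq_of_mem_greedyCands
  · simp only [greedyCands, Finset.mem_filter, Finset.mem_union, Finset.mem_image]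
    refine ⟨Or.inr ⟨_, hg.1, rfl⟩, by omega, ?_⟩
    rintro i' (hi' | ⟨x', hx', rfl⟩) hlt
    · have := hS_lt i' hi'
      omega
    · rw [IH x' (by omega) hx']
      have := hg.2.2 x' hx' (by omega)
      omega
  · intro b hb
    simp only [greedyCands, Finset.mem_filter, Finset.mem_union, Finset.mem_image] at hb
    obtain ⟨hb | ⟨y, hy, rfl⟩, hbx, hfree⟩ := hb
    · have := hR b hb
      omega
    have hy_cand : y ∈ greedyCands R' S' x := by
      refine Finset.mem_filter.2 ⟨hy, by omega, fun x' hx' hlt heq => ?_⟩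
      have := hfree (x' + N) (Or.inr ⟨x', hx', rfl⟩) (by omega)
      rw [IH x' hlt hx'] at this
      omega
    have := le_greedy_of_mem_greedyCands hy_cand
    omega

theorem arcsOf_union_image_add (hR : ∀ x ∈ R, x ≤ N) (hS : ∀ x ∈ S, x ≤ N)
    (hR' : ∀ x ∈ R', 0 < x) (hS' : ∀ x ∈ S', 0 < x) (h' : TableauCond R' S') :
    arcsOf (R ∪ R'.image (· + N)) (S ∪ S'.image (· + N)) =
      arcsOf R S ∪ (arcsOf R' S').image fun a => (a.1 + N, a.2 + N) := by
  rw [arcsOf, arcsOf, arcsOf, Finset.image_union, Finset.image_image, Finset.image_image]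
  congr 1
  · exact Finset.image_congr fun i hi => by
      simp only [greedy_union_image_add_of_le hR' hS' (hS i hi)]
  · exact Finset.image_congr fun x hx => by
      simp only [Function.comp_apply, greedy_union_image_add_add hR hS hR' hS' h' hx]

end UnionImageAdd

namespace List

variable {α : Type*} {r : α → α → Prop} {d : α}

theorem pairwise_iff_getD (hd : ∀ a, r a d ∧ r d a) {l : List α} :
    l.Pairwise r ↔ ∀ i j, i < j → r (l.getD i d) (l.getD j d) := by
  rw [pairwise_iff_getElem]
  constructor
  · intro h i j hij
    by_cases hj : j < l.length
    · rw [getD_eq_getElem _ _ (hij.trans hj), getD_eq_getElem _ _ hj]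
      exact h i j (hij.trans hj) hj hij
    rw [getD_eq_default _ _ (not_lt.1 hj)]
    by_cases hi : i < l.length
    · rw [getD_eq_getElem _ _ hi]
      exact (hd _).1
    · rw [getD_eq_default _ _ (not_lt.1 hi)]
      exact (hd d).1
  · intro h i j hi hj hij
    simpa only [getD_eq_getElem _ _ hi, getD_eq_getElem _ _ hj] using h i j hij

theorem isChain_iff_getD (hd : ∀ a, r a d) {l : List α} :
    l.IsChain r ↔ ∀ i, r (l.getD i d) (l.getD (i + 1) d) := by
  rw [isChain_iff_getElem]
  constructor
  · intro h i
    by_cases hi : i + 1 < l.length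
    · rw [getD_eq_getElem _ _ (by omega), getD_eq_getElem _ _ hi]
      exact h i hi
    · rw [getD_eq_default _ _ (not_lt.1 hi)]
      exact hd _
  · intro h i hi
    simpa only [getD_eq_getElem _ _ hi, getD_eq_getElem _ _ (Nat.lt_of_succ_lt hi)] using h i

end List

theorem mem_foldr_union_iff {α : Type*} [DecidableEq α] (l : List (Finset α)) (x : α) :
    x ∈ l.foldr (· ∪ ·) ∅ ↔ ∃ i, x ∈ l.getD i ∅ := by
  induction l with
  | nil => simp
  | cons a l ih =>
    rw [List.foldr_cons, Finset.mem_union, ih,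
      ← Nat.or_exists_add_one (p := fun i => x ∈ (a :: l).getD i ∅)]
    simp only [List.getD_cons_zero, List.getD_cons_succ]

theorem isSYT_iff (N : ℕ) (L : List (Finset ℕ)) :
    IsSYT N L ↔
      (∀ i < L.length, (L.getD i ∅).Nonempty) ∧
      (∀ i j, i < j → Disjoint (L.getD i ∅) (L.getD j ∅)) ∧
      (∀ x, (∃ i, x ∈ L.getD i ∅) ↔ x ∈ Finset.Icc 1 N) ∧
      ∀ i, TableauCond (L.getD i ∅) (L.getD (i + 1) ∅) := by
  have hne : (∀ s ∈ L, s.Nonempty) ↔ ∀ i < L.length, (L.getD i ∅).Nonempty := by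
    rw [List.forall_mem_iff_getElem]
    exact forall₂_congr fun i hi => by rw [List.getD_eq_getElem _ _ hi]
  have hcover : L.foldr (· ∪ ·) ∅ = Finset.Icc 1 N ↔
      ∀ x, (∃ i, x ∈ L.getD i ∅) ↔ x ∈ Finset.Icc 1 N := by
    simp only [Finset.ext_iff, mem_foldr_union_iff]
  have hchain : L.IsChain TableauCond → (L.map Finset.card).IsChain fun c c' => c' ≤ c :=
    fun h => List.isChain_map_of_isChain _ (fun _ _ hRS => hRS.1) h
  rw [IsSYT, hne, List.pairwise_iff_getD (d := ∅) fun a =>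
      ⟨Finset.disjoint_empty_right a, Finset.disjoint_empty_left a⟩,
    hcover, ← List.isChain_iff_getD tableauCond_empty]
  exact ⟨fun ⟨h1, h2, h3, _, h5⟩ => ⟨h1, h2, h3, h5⟩,
    fun ⟨h1, h2, h3, h5⟩ => ⟨h1, h2, h3, hchain h5, h5⟩⟩

theorem arcsOf_empty (R : Finset ℕ) : arcsOf R ∅ = ∅ :=
  Finset.image_empty _

theorem arcsSYT_cons (a : Finset ℕ) (l : List (Finset ℕ)) :
    arcsSYT (a :: l) = arcsOf a (l.getD 0 ∅) ∪ arcsSYT l := by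
  cases l with
  | nil => simp [arcsSYT, arcsOf_empty]
  | cons b l => simp [arcsSYT]

theorem arcsSYT_eq_biUnion {L : List (Finset ℕ)} {n : ℕ} (hn : L.length ≤ n + 1) :
    arcsSYT L = (Finset.range n).biUnion fun i => arcsOf (L.getD i ∅) (L.getD (i + 1) ∅) := by
  induction L generalizing n with
  | nil => ext; simp [arcsSYT, arcsOf_empty]
  | cons a l ih =>
    cases n with
    | zero =>
      obtain rfl : l = [] := List.eq_nil_of_length_eq_zero (by simpa using hn)
      simp [arcsSYT]
    | succ m =>
      rw [arcsSYT_cons, ih (by simpa using hn), Finset.range_add_one', Finset.biUnion_insert,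
        Finset.map_eq_image, Finset.image_biUnion]
      rfl

theorem Disjoint.union_image_add {A B C D : Finset ℕ} {N : ℕ} (hAC : Disjoint A C)
    (hBD : Disjoint B D) (hA : ∀ x ∈ A, x ≤ N) (hB : ∀ x ∈ B, 0 < x) (hC : ∀ x ∈ C, x ≤ N)
    (hD : ∀ x ∈ D, 0 < x) : Disjoint (A ∪ B.image (· + N)) (C ∪ D.image (· + N)) := by
  have hlt_disj {X Y : Finset ℕ} (h : ∀ x ∈ X, ∀ y ∈ Y, x < y) : Disjoint X Y :=
    Finset.disjoint_left.2 fun x hX hY => lt_irrefl x (h x hX x hY)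
  rw [Finset.disjoint_union_left, Finset.disjoint_union_right, Finset.disjoint_union_right]
  refine ⟨⟨hAC, hlt_disj (forall_lt_image_add hA hD)⟩,
    (hlt_disj (forall_lt_image_add hC hB)).symm, ?_⟩
  exact (Finset.disjoint_image (add_left_injective N)).2 hBD

theorem shuffleRows_getD {L L' : List (Finset ℕ)} {N : ℕ} (hL : ∀ i, ∀ x ∈ L.getD i ∅, x ≤ N)
    (N' i : ℕ) :
    (shuffleRows L L' N N').getD i ∅ = L.getD i ∅ ∪ (L'.getD i ∅).image (· + N) := by
  by_cases hi : i < max L.length L'.length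
  · have hid : (L.getD i ∅).image (fun x => if x ≤ N then x else x + N') = L.getD i ∅ := by
      rw [Finset.image_congr fun x hx => if_pos (hL i x hx), Finset.image_id']
    rw [shuffleRows, List.getD_eq_getElem _ _ (by simpa using hi), List.getElem_map,
      List.getElem_range, hid]
  · rw [not_lt, max_le_iff] at hi
    rw [List.getD_eq_default _ _ (by simpa [shuffleRows] using hi), List.getD_eq_default _ _ hi.1,
      List.getD_eq_default _ _ hi.2, Finset.image_empty, Finset.empty_union]

theorem length_shuffleRows (L L' : List (Finset ℕ)) (i N' : ℕ) :
    (shuffleRows L L' i N').length = max L.length L'.length := by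
  simp [shuffleRows]

namespace IsSYT

variable {N N' : ℕ} {L L' : List (Finset ℕ)}

theorem mem_Icc (hT : IsSYT N L) {i x : ℕ} (hx : x ∈ L.getD i ∅) : x ∈ Finset.Icc 1 N :=
  (((isSYT_iff N L).1 hT).2.2.1 x).1 ⟨i, hx⟩

theorem le_of_mem_getD (hT : IsSYT N L) (i : ℕ) : ∀ x ∈ L.getD i ∅, x ≤ N :=
  fun _ hx => (Finset.mem_Icc.1 (hT.mem_Icc hx)).2

theorem pos_of_mem_getD (hT : IsSYT N L) (i : ℕ) : ∀ x ∈ L.getD i ∅, 0 < x :=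
  fun _ hx => (Finset.mem_Icc.1 (hT.mem_Icc hx)).1

theorem shuffleRows (hT : IsSYT N L) (hT' : IsSYT N' L') :
    IsSYT (N + N') (shuffleRows L L' N N') := by
  obtain ⟨hne, hdisj, hcover, htab⟩ := (isSYT_iff N L).1 hT
  obtain ⟨hne', hdisj', hcover', htab'⟩ := (isSYT_iff N' L').1 hT'
  have hle := hT.le_of_mem_getD
  have hpos := hT'.pos_of_mem_getD
  refine (isSYT_iff _ _).2 ⟨fun i hi => ?_, fun i j hij => ?_, fun x => ?_, fun i => ?_⟩ <;>
    simp only [shuffleRows_getD hle]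
  · rw [length_shuffleRows, lt_max_iff] at hi
    rcases hi with hi | hi
    · exact (hne i hi).mono Finset.subset_union_left
    · exact ((hne' i hi).image _).mono Finset.subset_union_right
  · exact (hdisj i j hij).union_image_add (hdisj' i j hij) (hle i) (hpos i) (hle j) (hpos j)
  · simp only [Finset.mem_union, Finset.mem_image, Finset.mem_Icc]
    constructor
    · rintro ⟨i, hx | ⟨a, ha, rfl⟩⟩
      · have := Finset.mem_Icc.1 (hT.mem_Icc hx)
        omega
      · have := Finset.mem_Icc.1 (hT'.mem_Icc ha)
        omega
    · intro hx
      by_cases hxN : x ≤ N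
      · obtain ⟨i, hi⟩ := (hcover x).2 (Finset.mem_Icc.2 ⟨hx.1, hxN⟩)
        exact ⟨i, Or.inl hi⟩
      · obtain ⟨i, hi⟩ := (hcover' (x - N)).2 (Finset.mem_Icc.2 ⟨by omega, by omega⟩)
        exact ⟨i, Or.inr ⟨x - N, hi, by omega⟩⟩
  · exact (htab i).union_image_add (hle i) (hle (i + 1)) (hpos i) (hpos (i + 1)) (htab' i)

end IsSYT

theorem arcsSYT_shuffleRows {N N' : ℕ} {L L' : List (Finset ℕ)} (hT : IsSYT N L)
    (hT' : IsSYT N' L') :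
    arcsSYT (shuffleRows L L' N N') =
      arcsSYT L ∪ (arcsSYT L').image fun a => (a.1 + N, a.2 + N) := by
  have hle := hT.le_of_mem_getD
  have hpos := hT'.pos_of_mem_getD
  have htab' := ((isSYT_iff N' L').1 hT').2.2.2
  have hZ := length_shuffleRows L L' N N'
  rw [arcsSYT_eq_biUnion (n := max L.length L'.length) (by omega),
    arcsSYT_eq_biUnion (n := max L.length L'.length) (by omega),
    arcsSYT_eq_biUnion (n := max L.length L'.length) (by omega),
    Finset.biUnion_image, ← Finset.biUnion_union]
  refine Finset.biUnion_congr rfl fun i _ => ?_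
  rw [shuffleRows_getD hle, shuffleRows_getD hle]
  exact arcsOf_union_image_add (hle i) (hle (i + 1)) (hpos i) (hpos (i + 1)) (htab' i)

/-- The shuffle of `T'` into `T` at `i = N` is a standard Young tableau, and its arc set is
`arcs(T) ∪ {(a + N, b + N) : (a,b) ∈ arcs(T')}`. -/
theorem shuffle_at_N_is_SYT_and_arcs (N N' : ℕ) (L L' : List (Finset ℕ))
    (hT : IsSYT N L) (hT' : IsSYT N' L') :
    IsSYT (N + N') (shuffleRows L L' N N') ∧
    arcsSYT (shuffleRows L L' N N') =
      arcsSYT L ∪ (arcsSYT L').image (fun a => (a.1 + N, a.2 + N)) :=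
  ⟨hT.shuffleRows hT', arcsSYT_shuffleRows hT hT'⟩
end

section
/- If T and T′ are standard Young tableaux with N and N′ boxes respectively and i ≤ N, then the shuffle T′ ↦ᵢ T is a standard Young tableau with N + N′ boxes: its rows partition {1,…,N+N′}, the row lengths are weakly decreasing from bottom to top, and each consecutive pair of rows satisfies the tableau condition. -/
/-!
Write the tableau condition for a pair of rows `(R, S)` in counting form: for every `t`, at most
as many elements of `S` are `≤ t` as elements of `R` are `< t`. This form is invariant under
strictly monotone relabelling and additive over unions with disjoint lower rows. A pair of
consecutive rows of the shuffle is the union of the images of a pair of rows of `T` under the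
strictly monotone `σ` and of a pair of rows of `T′` under `x ↦ x + i`, and these images occupy
disjoint ranges (`σ` skips exactly `i + 1, …, i + N′`), so the tableau condition passes to the
shuffle. For the same reason the rows of the shuffle are disjoint and, as `i ≤ N`, cover
`{1, …, N + N′}`.
-/

open scoped Classical

open Finset

theorem nthSmallest_lt_iff {s : Finset ℕ} {j : ℕ} (hj : j < #s) (t : ℕ) :
    nthSmallest s j < t ↔ j < #{x ∈ s | x < t} := by
  have hcount : #{x ∈ s | x < t} = Nat.count (· ∈ s) t := by
    rw [Nat.count_eq_card_filter_range]
    congr 1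
    ext x
    simp [and_comm]
  have hj' : j < #s.finite_toSet.toFinset := by rwa [Finset.finite_toSet_toFinset]
  rw [nthSmallest_eq_nth, hcount]
  refine ⟨fun h => ?_, Nat.nth_lt_of_lt_count⟩
  calc j = Nat.count (· ∈ s) (Nat.nth (· ∈ s) j) :=
        (Nat.count_nth_of_lt_card_finite s.finite_toSet hj').symm
    _ < Nat.count (· ∈ s) t := Nat.count_strict_mono (Nat.nth_mem_of_lt_card _ hj') h

theorem nthSmallest_le_iff {s : Finset ℕ} {j : ℕ} (hj : j < #s) (t : ℕ) :
    nthSmallest s j ≤ t ↔ j < #{x ∈ s | x ≤ t} := by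
  simp only [← Nat.lt_add_one_iff, nthSmallest_lt_iff hj]

theorem StrictMono.nthSmallest_image {f : ℕ → ℕ} (hf : StrictMono f) {s : Finset ℕ}
    {j : ℕ} (hj : j < #s) : nthSmallest (s.image f) j = f (nthSmallest s j) := by
  have hmap : s.image f = s.map ⟨f, hf.injective⟩ := by ext; simp
  rw [nthSmallest, nthSmallest, hmap, ← (hf.strictMonoOn s).map_finsetSort,
    List.getD_eq_getElem _ _ (by simpa), List.getElem_map, List.getD_eq_getElem]
  rfl

theorem tableauCond_iff_card_filter_le {R S : Finset ℕ} :
    TableauCond R S ↔ ∀ t, #{y ∈ S | y ≤ t} ≤ #{x ∈ R | x < t} := by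
  constructor
  · rintro ⟨hcard, hlt⟩ t
    cases hk : #{y ∈ S | y ≤ t} with
    | zero => exact Nat.zero_le _
    | succ m =>
      have hmS : m < #S := by
        have := card_filter_le S (· ≤ t)
        omega
      have hS : nthSmallest S m ≤ t := (nthSmallest_le_iff hmS t).2 (by omega)
      exact (nthSmallest_lt_iff (hmS.trans_le hcard) t).1 ((hlt m hmS).trans_le hS)
  · intro h
    have hcard : #S ≤ #R := by
      have hmax : ∀ y ∈ S, y ≤ S.sup id := fun y hy => le_sup (f := id) hy
      calc #S = #{y ∈ S | y ≤ S.sup id} := by rw [filter_true_of_mem hmax]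
        _ ≤ #{x ∈ R | x < S.sup id} := h _
        _ ≤ #R := card_filter_le _ _
    refine ⟨hcard, fun j hj => (nthSmallest_lt_iff (hj.trans_le hcard) _).2 ?_⟩
    exact ((nthSmallest_le_iff hj _).1 le_rfl).trans_le (h _)

theorem TableauCond.image {R S : Finset ℕ} (h : TableauCond R S) {f : ℕ → ℕ}
    (hf : StrictMono f) : TableauCond (R.image f) (S.image f) := by
  obtain ⟨hcard, hlt⟩ := h
  simp only [TableauCond, card_image_of_injective _ hf.injective]
  refine ⟨hcard, fun j hj => ?_⟩
  rw [hf.nthSmallest_image hj, hf.nthSmallest_image (hj.trans_le hcard)]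
  exact hf (hlt j hj)

theorem TableauCond.union {R S R' S' : Finset ℕ} (h : TableauCond R S) (h' : TableauCond R' S')
    (hR : Disjoint R R') : TableauCond (R ∪ R') (S ∪ S') := by
  rw [tableauCond_iff_card_filter_le] at h h' ⊢
  intro t
  calc #{y ∈ S ∪ S' | y ≤ t} ≤ #{y ∈ S | y ≤ t} + #{y ∈ S' | y ≤ t} := by
        rw [filter_union]; exact card_union_le _ _
    _ ≤ #{x ∈ R | x < t} + #{x ∈ R' | x < t} := add_le_add (h t) (h' t)
    _ = #{x ∈ R ∪ R' | x < t} := by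
        rw [filter_union, card_union_of_disjoint (disjoint_filter_filter hR)]

theorem mem_foldr_union {l : List (Finset ℕ)} {x : ℕ} :
    x ∈ l.foldr (· ∪ ·) ∅ ↔ ∃ t ∈ l, x ∈ t := by
  induction l with
  | nil => simp
  | cons a l ih => simp [ih]

theorem foldr_union_map_range (f : ℕ → Finset ℕ) (n : ℕ) :
    ((List.range n).map f).foldr (· ∪ ·) ∅ = (range n).biUnion f := by
  ext x
  simp [mem_foldr_union]

theorem foldr_union_eq_biUnion_getD (L : List (Finset ℕ)) {n : ℕ} (hn : L.length ≤ n) :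
    L.foldr (· ∪ ·) ∅ = (range n).biUnion (L.getD · ∅) := by
  ext x
  rw [mem_foldr_union, mem_biUnion]
  constructor
  · rintro ⟨t, ht, hx⟩
    obtain ⟨s, hs, rfl⟩ := List.getElem_of_mem ht
    exact ⟨s, mem_range.2 (by omega), by rwa [List.getD_eq_getElem _ _ hs]⟩
  · rintro ⟨s, -, hx⟩
    by_cases hs : s < L.length
    · rw [List.getD_eq_getElem _ _ hs] at hx
      exact ⟨_, List.getElem_mem hs, hx⟩
    · rw [List.getD_eq_default _ _ (not_lt.1 hs)] at hx
      simp at hx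

theorem getD_subset_foldr_union (L : List (Finset ℕ)) (s : ℕ) :
    L.getD s ∅ ⊆ L.foldr (· ∪ ·) ∅ := by
  rw [foldr_union_eq_biUnion_getD L (le_max_right (s + 1) L.length)]
  exact subset_biUnion_of_mem (L.getD · ∅) (mem_range.2 (by omega))

theorem getD_nonempty {L : List (Finset ℕ)} (h : ∀ t ∈ L, t.Nonempty) {s : ℕ}
    (hs : s < L.length) : (L.getD s ∅).Nonempty := by
  rw [List.getD_eq_getElem _ _ hs]
  exact h _ (List.getElem_mem hs)

theorem disjoint_getD {L : List (Finset ℕ)} (h : L.Pairwise Disjoint) {s t : ℕ} (hst : s < t) :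
    Disjoint (L.getD s ∅) (L.getD t ∅) := by
  by_cases ht : t < L.length
  · rw [List.getD_eq_getElem _ _ (hst.trans ht), List.getD_eq_getElem _ _ ht]
    exact List.pairwise_iff_getElem.1 h s t (hst.trans ht) ht hst
  · rw [List.getD_eq_default _ _ (not_lt.1 ht)]
    exact disjoint_empty_right _

theorem tableauCond_getD {L : List (Finset ℕ)} (h : L.IsChain TableauCond) (s : ℕ) :
    TableauCond (L.getD s ∅) (L.getD (s + 1) ∅) := by
  by_cases hs : s + 1 < L.length
  · rw [List.getD_eq_getElem _ _ (by omega), List.getD_eq_getElem _ _ hs]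
    exact List.isChain_iff_getElem.1 h s hs
  · rw [List.getD_eq_default _ _ (not_lt.1 hs)]
    exact ⟨by simp, by simp⟩

theorem isSYT_of_isChain_tableauCond {N : ℕ} {L : List (Finset ℕ)}
    (hne : ∀ t ∈ L, t.Nonempty) (hdisj : L.Pairwise Disjoint)
    (hunion : L.foldr (· ∪ ·) ∅ = Icc 1 N) (hcond : L.IsChain TableauCond) : IsSYT N L :=
  ⟨hne, hdisj, hunion, List.isChain_map _ |>.2 (hcond.imp fun _ _ h => h.1), hcond⟩

/-- The map `σ` of the shuffle. -/
def shiftAbove (i N' x : ℕ) : ℕ := if x ≤ i then x else x + N'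

theorem strictMono_shiftAbove (i N' : ℕ) : StrictMono (shiftAbove i N') := by
  intro x y hxy
  unfold shiftAbove
  split_ifs <;> omega

def shuffleRow (i N' : ℕ) (R R' : Finset ℕ) : Finset ℕ :=
  R.image (shiftAbove i N') ∪ R'.image (· + i)

section shuffleRow
variable {i N' : ℕ} {R S R' S' : Finset ℕ}

theorem disjoint_image_shiftAbove_image_add (hR' : R' ⊆ Icc 1 N') :
    Disjoint (R.image (shiftAbove i N')) (R'.image (· + i)) := by
  simp only [disjoint_left, mem_image]
  rintro _ ⟨x, -, rfl⟩ ⟨y, hy, hxy⟩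
  have := mem_Icc.1 (hR' hy)
  unfold shiftAbove at hxy
  split_ifs at hxy <;> omega

theorem TableauCond.shuffleRow (h : TableauCond R S) (h' : TableauCond R' S')
    (hR' : R' ⊆ Icc 1 N') : TableauCond (shuffleRow i N' R R') (shuffleRow i N' S S') :=
  (h.image (strictMono_shiftAbove i N')).union (h'.image add_left_strictMono)
    (disjoint_image_shiftAbove_image_add hR')

theorem disjoint_shuffleRow (hRS : Disjoint R S) (hRS' : Disjoint R' S')
    (hR' : R' ⊆ Icc 1 N') (hS' : S' ⊆ Icc 1 N') :
    Disjoint (shuffleRow i N' R R') (shuffleRow i N' S S') := by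
  rw [shuffleRow, shuffleRow, disjoint_union_left, disjoint_union_right, disjoint_union_right]
  exact ⟨⟨(disjoint_image (strictMono_shiftAbove i N').injective).2 hRS,
    disjoint_image_shiftAbove_image_add hS'⟩, (disjoint_image_shiftAbove_image_add hR').symm,
    (disjoint_image (add_left_injective i)).2 hRS'⟩

end shuffleRow

theorem shuffleRow_Icc {N N' i : ℕ} (hi : i ≤ N) :
    shuffleRow i N' (Icc 1 N) (Icc 1 N') = Icc 1 (N + N') := by
  ext x
  simp only [shuffleRow, shiftAbove, mem_union, mem_image, mem_Icc]
  constructor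
  · rintro (⟨y, hy, rfl⟩ | ⟨y, hy, rfl⟩)
    · split_ifs <;> omega
    · omega
  · intro hx
    by_cases h1 : x ≤ i
    · exact Or.inl ⟨x, by omega, if_pos h1⟩
    by_cases h2 : x ≤ i + N'
    · exact Or.inr ⟨x - i, by omega, by omega⟩
    · exact Or.inl ⟨x - N', by omega, by rw [if_neg (by omega)]; omega⟩

theorem biUnion_shuffleRow (i N' : ℕ) (s : Finset ℕ) (R R' : ℕ → Finset ℕ) :
    s.biUnion (fun k => shuffleRow i N' (R k) (R' k)) =
      shuffleRow i N' (s.biUnion R) (s.biUnion R') := by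
  simp only [shuffleRow, biUnion_union, biUnion_image]

/-- The shuffle of a standard Young tableau `T'` with `N'` boxes into a standard Young
tableau `T` with `N` boxes at any position `i ≤ N` is a standard Young tableau with
`N + N'` boxes. -/
theorem shuffle_is_SYT (N N' : ℕ) (L L' : List (Finset ℕ))
    (hT : IsSYT N L) (hT' : IsSYT N' L') (i : ℕ) (hi : i ≤ N) :
    IsSYT (N + N') (shuffleRows L L' i N') := by
  obtain ⟨hne, hdisj, hunion, -, hcond⟩ := hT
  obtain ⟨hne', hdisj', hunion', -, hcond'⟩ := hT'
  have hsub' (s : ℕ) : L'.getD s ∅ ⊆ Icc 1 N' := hunion' ▸ getD_subset_foldr_union L' s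
  set n := max L.length L'.length
  have hrows : shuffleRows L L' i N' =
      (List.range n).map fun s => shuffleRow i N' (L.getD s ∅) (L'.getD s ∅) := rfl
  rw [hrows]
  refine isSYT_of_isChain_tableauCond ?_ ?_ ?_ ?_
  · simp only [List.mem_map, List.mem_range, forall_exists_index, and_imp]
    rintro _ s hsn rfl
    rcases lt_or_ge s L.length with hsL | hsL
    · exact ((getD_nonempty hne hsL).image _).mono subset_union_left
    · exact ((getD_nonempty hne' (by omega)).image _).mono subset_union_right
  · rw [List.pairwise_map]
    exact List.pairwise_lt_range.imp fun hst =>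
      disjoint_shuffleRow (disjoint_getD hdisj hst) (disjoint_getD hdisj' hst) (hsub' _) (hsub' _)
  · rw [foldr_union_map_range, biUnion_shuffleRow,
      ← foldr_union_eq_biUnion_getD L (le_max_left _ _),
      ← foldr_union_eq_biUnion_getD L' (le_max_right _ _), hunion, hunion']
    exact shuffleRow_Icc hi
  · rw [List.isChain_map, List.isChain_range]
    exact fun s _ => (tableauCond_getD hcond s).shuffleRow (tableauCond_getD hcond' s) (hsub' s)
end
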